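/- Let κ > 0 and let σ₁, σ₂ > 0 satisfy √3/√(κ+3) < σᵢ < √(κ+3)/√3 for i = 1, 2, and set S = diag(σ₁, σ₂, 1). Then the function f : S² → ℝ given by f(y) = ‖S⁻¹ y‖^{−3} · exp(κ·(S⁻¹ y)₃ / ‖S⁻¹ y‖) (which is, up to the normalization constant κ/(4π sinh κ · det S), the density of the Kent-like ZLP flow distribution) has exactly one local maximum on S², attained at the north pole (0,0,1), and exactly one local minimum on S², attained at the antipodal point (0,0,−1). -/

import Mathlib

open Matrix Real

/-- The (unnormalized) density of the Kent-like ZLP flow distribution on `S²` with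
concentration `κ` and linear-project matrix `S = diag(σ₁, σ₂, 1)`:
`f(y) = ‖S⁻¹ y‖^{−3} · exp(κ·(S⁻¹ y)₃ / ‖S⁻¹ y‖)`. -/
noncomputable def kentDensity (σ₁ σ₂ κ : ℝ) (y : EuclideanSpace ℝ (Fin 3)) : ℝ :=
  (‖(WithLp.equiv 2 (Fin 3 → ℝ)).symm
      ((Matrix.diagonal ![σ₁, σ₂, 1])⁻¹.mulVec (WithLp.equiv 2 (Fin 3 → ℝ) y))‖ ^ 3)⁻¹ *
    Real.exp (κ *
      ((Matrix.diagonal ![σ₁, σ₂, 1])⁻¹.mulVec (WithLp.equiv 2 (Fin 3 → ℝ) y)) 2 /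
      ‖(WithLp.equiv 2 (Fin 3 → ℝ)).symm
        ((Matrix.diagonal ![σ₁, σ₂, 1])⁻¹.mulVec (WithLp.equiv 2 (Fin 3 → ℝ) y))‖)

/-- The north pole `(0,0,1) ∈ S²`. -/
noncomputable def northPole : EuclideanSpace ℝ (Fin 3) :=
  (WithLp.equiv 2 (Fin 3 → ℝ)).symm ![0, 0, 1]

/-- The south pole `(0,0,−1) ∈ S²`. -/
noncomputable def southPole : EuclideanSpace ℝ (Fin 3) :=
  (WithLp.equiv 2 (Fin 3 → ℝ)).symm ![0, 0, -1]

/-! ### Auxiliary material -/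

/-- The meridian profile function. -/
noncomputable def ψ (κ m t : ℝ) : ℝ :=
  (Real.sqrt (m + (1-m)*t^2) ^ 3)⁻¹ * Real.exp (κ * t / Real.sqrt (m + (1-m)*t^2))

lemma q_pos {m t : ℝ} (hm : 0 < m) (ht : t^2 ≤ 1) : 0 < m + (1-m)*t^2 := by
  rcases (sq_nonneg t).eq_or_lt with h | h
  · rw [← h]; linarith
  · nlinarith [mul_nonneg hm.le (sub_nonneg.2 ht)]

lemma key_ineq {κ m t : ℝ} (hκ : 0 < κ) (hm1 : 3 < m*(κ+3)) (hm2 : 3*m < κ+3)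
    (ht : t^2 ≤ 1) : 3*(1-m)*t*Real.sqrt (m + (1-m)*t^2) < κ*m := by
  have hm : 0 < m := by nlinarith
  have hq : 0 < m + (1-m)*t^2 := q_pos hm ht
  set r := Real.sqrt (m + (1-m)*t^2) with hr
  have hr0 : 0 ≤ r := Real.sqrt_nonneg _
  have hr2 : r^2 = m + (1-m)*t^2 := Real.sq_sqrt hq.le
  have hkm : 0 < κ*m := mul_pos hκ hm
  rcases le_or_gt ((1-m)*t) 0 with h | h
  · calc 3*(1-m)*t*r = 3*((1-m)*t)*r := by ring
    _ ≤ 0 := mul_nonpos_of_nonpos_of_nonneg (by nlinarith) hr0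
    _ < κ*m := hkm
  · refine lt_of_pow_lt_pow_left₀ 2 hkm.le ?_
    have hsq : (3*(1-m)*t*r)^2 = 9*(1-m)^2*(t^2*(m + (1-m)*t^2)) := by
      rw [mul_pow, hr2]; ring
    rw [hsq]
    rcases lt_trichotomy m 1 with hm1' | hm1' | hm1'
    · have e1 : m + (1-m)*t^2 ≤ 1 := by nlinarith
      have e2 : t^2*(m + (1-m)*t^2) ≤ 1 := by nlinarith [sq_nonneg t]
      have e3 : 3*(1-m) < κ*m := by nlinarith
      have e4 : 9*(1-m)^2*(t^2*(m + (1-m)*t^2)) ≤ 9*(1-m)^2 := by nlinarith [sq_nonneg (1-m)]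
      have e5 : 9*(1-m)^2 < (κ*m)^2 := by nlinarith
      linarith
    · rw [hm1']; simp; positivity
    · have hk3 : 3*(m-1) < κ := by nlinarith
      have f1 : t^2*(m + (1-m)*t^2) ≤ m := by nlinarith [sq_nonneg t, hq.le]
      have f2 : 9*(1-m)^2*(t^2*(m+(1-m)*t^2)) ≤ 9*(1-m)^2*m := by nlinarith [sq_nonneg (1-m)]
      have f3 : 9*(1-m)^2*m < κ^2*m := by nlinarith
      have f4 : κ^2*m ≤ κ^2*m^2 := by nlinarith [sq_nonneg κ]
      have : (κ*m)^2 = κ^2*m^2 := by ring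
      linarith

lemma psi_deriv {κ m t : ℝ} (hq : 0 < m + (1-m)*t^2) :
    HasDerivAt (ψ κ m)
      (Real.exp (κ*t/Real.sqrt (m + (1-m)*t^2)) *
        (κ*m - 3*(1-m)*t*Real.sqrt (m + (1-m)*t^2)) / (m + (1-m)*t^2)^3) t := by
  have hr0 : 0 < Real.sqrt (m + (1-m)*t^2) := Real.sqrt_pos.2 hq
  have hr2 : Real.sqrt (m + (1-m)*t^2)^2 = m + (1-m)*t^2 := Real.sq_sqrt hq.le
  have h1 : HasDerivAt (fun s : ℝ => m + (1-m)*s^2) (2*(1-m)*t) t := by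
    have := ((hasDerivAt_pow 2 t).const_mul (1-m)).const_add m
    exact this.congr_deriv (by simp; ring)
  have hrd : HasDerivAt (fun s : ℝ => Real.sqrt (m + (1-m)*s^2))
      (1/(2*Real.sqrt (m + (1-m)*t^2)) * (2*(1-m)*t)) t :=
    (Real.hasDerivAt_sqrt hq.ne').comp t h1
  have hpow := hrd.fun_pow 3
  have hinv := hpow.inv (by positivity)
  have hnum : HasDerivAt (fun s : ℝ => κ*s) κ t := by
    simpa using (hasDerivAt_id t).const_mul κ
  have hdiv := hnum.fun_div hrd hr0.ne'
  have hexp := hdiv.exp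
  have final := hinv.fun_mul hexp
  refine final.congr_deriv (Eq.symm ?_)
  simp only [Pi.inv_apply]
  set r := Real.sqrt (m + (1-m)*t^2) with hrdef
  set E := Real.exp (κ*t/r) with hE
  rw [← hr2]
  field_simp
  ring_nf
  linear_combination (-(E*κ*r)) * hr2

lemma sq_le_one_of_mem {t : ℝ} (h : t ∈ Set.Icc (-1:ℝ) 1) : t^2 ≤ 1 := by
  obtain ⟨h1, h2⟩ := h; nlinarith

lemma psi_mono {κ m : ℝ} (hκ : 0 < κ) (hm1 : 3 < m*(κ+3)) (hm2 : 3*m < κ+3) :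
    StrictMonoOn (ψ κ m) (Set.Icc (-1:ℝ) 1) := by
  have hm : 0 < m := by nlinarith
  apply strictMonoOn_of_deriv_pos (convex_Icc _ _)
  · intro t ht
    exact (psi_deriv (q_pos hm (sq_le_one_of_mem ht))).continuousAt.continuousWithinAt
  · intro t ht
    rw [interior_Icc] at ht
    have ht2 : t^2 ≤ 1 := sq_le_one_of_mem ⟨ht.1.le, ht.2.le⟩
    have hq := q_pos hm ht2
    rw [(psi_deriv hq).deriv]
    have := key_ineq hκ hm1 hm2 ht2
    exact div_pos (mul_pos (Real.exp_pos _) (by linarith)) (by positivity)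

lemma psi_one (κ m : ℝ) : ψ κ m 1 = Real.exp κ := by
  simp [ψ]

lemma psi_neg_one (κ m : ℝ) : ψ κ m (-1) = Real.exp (-κ) := by
  norm_num [ψ]

lemma kent_coord {σ₁ σ₂ : ℝ} (κ : ℝ) (h1 : σ₁ ≠ 0) (h2 : σ₂ ≠ 0) (y : EuclideanSpace ℝ (Fin 3)) :
    kentDensity σ₁ σ₂ κ y =
      (Real.sqrt ((σ₁⁻¹ * y 0)^2 + (σ₂⁻¹ * y 1)^2 + (y 2)^2) ^ 3)⁻¹ *
        Real.exp (κ * y 2 / Real.sqrt ((σ₁⁻¹ * y 0)^2 + (σ₂⁻¹ * y 1)^2 + (y 2)^2)) := by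
  have hinv : (Matrix.diagonal ![σ₁, σ₂, 1])⁻¹ = Matrix.diagonal ![σ₁⁻¹, σ₂⁻¹, 1] := by
    apply Matrix.inv_eq_left_inv
    ext i j
    fin_cases i <;> fin_cases j <;>
      simp [Matrix.mul_apply, Fin.sum_univ_three, Matrix.diagonal, Matrix.one_apply, h1, h2]
  have hnorm : ∀ v : Fin 3 → ℝ, ‖(WithLp.equiv 2 (Fin 3 → ℝ)).symm v‖
      = Real.sqrt ((v 0)^2 + (v 1)^2 + (v 2)^2) := by
    intro v
    rw [EuclideanSpace.norm_eq]
    simp [Fin.sum_univ_three, sq_abs]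
  rw [kentDensity, hinv, hnorm]
  simp [Matrix.mulVec_diagonal]

/-- A point on the meridian with direction `(c₁, c₂)` at height `s`. -/
noncomputable def pt (c₁ c₂ s : ℝ) : EuclideanSpace ℝ (Fin 3) :=
  (WithLp.equiv 2 (Fin 3 → ℝ)).symm ![c₁*Real.sqrt (1-s^2), c₂*Real.sqrt (1-s^2), s]

lemma sphere_iff (y : EuclideanSpace ℝ (Fin 3)) :
    y ∈ Metric.sphere (0 : EuclideanSpace ℝ (Fin 3)) 1 ↔ (y 0)^2+(y 1)^2+(y 2)^2 = 1 := by
  rw [mem_sphere_zero_iff_norm, EuclideanSpace.norm_eq]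
  simp only [Real.norm_eq_abs, sq_abs, Fin.sum_univ_three]
  rw [show ((1:ℝ)) = Real.sqrt 1 from (Real.sqrt_one).symm]
  rw [Real.sqrt_inj (by positivity) (by norm_num)]
  simp [Real.sqrt_one]

lemma pt_mem {c₁ c₂ s : ℝ} (hc : c₁^2+c₂^2 = 1) (hs : s^2 ≤ 1) :
    pt c₁ c₂ s ∈ Metric.sphere (0 : EuclideanSpace ℝ (Fin 3)) 1 := by
  rw [sphere_iff]
  have h : Real.sqrt (1-s^2)^2 = 1 - s^2 := Real.sq_sqrt (by linarith)
  show (c₁*Real.sqrt (1-s^2))^2 + (c₂*Real.sqrt (1-s^2))^2 + s^2 = 1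
  nlinarith [h]

lemma pt_cont (c₁ c₂ : ℝ) : Continuous (fun s : ℝ => pt c₁ c₂ s) := by
  apply (PiLp.continuous_toLp 2 (fun _ : Fin 3 => ℝ)).comp
  apply continuous_pi
  intro i
  fin_cases i <;> simp <;> fun_prop

lemma kent_pt {σ₁ σ₂ : ℝ} (κ : ℝ) (h1 : σ₁ ≠ 0) (h2 : σ₂ ≠ 0) {c₁ c₂ s : ℝ}
    (hc : c₁^2+c₂^2 = 1) (hs : s^2 ≤ 1) :
    kentDensity σ₁ σ₂ κ (pt c₁ c₂ s) = ψ κ ((σ₁⁻¹*c₁)^2 + (σ₂⁻¹*c₂)^2) s := by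
  rw [kent_coord κ h1 h2]
  have h : Real.sqrt (1-s^2)^2 = 1 - s^2 := Real.sq_sqrt (by linarith)
  have e0 : pt c₁ c₂ s 0 = c₁*Real.sqrt (1-s^2) := rfl
  have e1 : pt c₁ c₂ s 1 = c₂*Real.sqrt (1-s^2) := rfl
  have e2 : pt c₁ c₂ s 2 = s := rfl
  rw [e0, e1, e2, ψ]
  have : (σ₁⁻¹ * (c₁*Real.sqrt (1-s^2)))^2 + (σ₂⁻¹ * (c₂*Real.sqrt (1-s^2)))^2 + s^2
      = ((σ₁⁻¹*c₁)^2 + (σ₂⁻¹*c₂)^2) + (1-((σ₁⁻¹*c₁)^2 + (σ₂⁻¹*c₂)^2))*s^2 := by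
    have : (σ₁⁻¹ * (c₁*Real.sqrt (1-s^2)))^2 = (σ₁⁻¹*c₁)^2 * (1-s^2) := by
      rw [mul_pow, mul_pow, h]; ring
    rw [this]
    have : (σ₂⁻¹ * (c₂*Real.sqrt (1-s^2)))^2 = (σ₂⁻¹*c₂)^2 * (1-s^2) := by
      rw [mul_pow, mul_pow, h]; ring
    rw [this]; ring
  rw [this]

lemma pt_one (c₁ c₂ : ℝ) : pt c₁ c₂ 1 = northPole := by
  unfold pt northPole
  congr 1
  funext i
  fin_cases i <;> norm_num

lemma pt_neg_one (c₁ c₂ : ℝ) : pt c₁ c₂ (-1) = southPole := by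
  unfold pt southPole
  congr 1
  funext i
  fin_cases i <;> norm_num

lemma rep {y : EuclideanSpace ℝ (Fin 3)}
    (hy : y ∈ Metric.sphere (0 : EuclideanSpace ℝ (Fin 3)) 1) :
    ∃ c₁ c₂ : ℝ, c₁^2+c₂^2 = 1 ∧ y = pt c₁ c₂ (y 2) ∧ (y 2)^2 ≤ 1 := by
  rw [sphere_iff] at hy
  have ht2 : (y 2)^2 ≤ 1 := by nlinarith [sq_nonneg (y 0), sq_nonneg (y 1)]
  rcases eq_or_lt_of_le ht2 with h | h
  · have h0 : y 0 = 0 := by nlinarith [sq_nonneg (y 1)]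
    have h1 : y 1 = 0 := by nlinarith [sq_nonneg (y 0)]
    refine ⟨1, 0, by norm_num, ?_, ht2⟩
    have : Real.sqrt (1 - (y 2)^2) = 0 := by rw [← h]; simp
    ext i
    fin_cases i <;> simp [pt, this, h0, h1]
  · set w := Real.sqrt (1 - (y 2)^2) with hw
    have hw0 : 0 < w := Real.sqrt_pos.2 (by linarith)
    have hw2 : w^2 = 1 - (y 2)^2 := Real.sq_sqrt (by linarith)
    refine ⟨y 0 / w, y 1 / w, ?_, ?_, ht2⟩
    · field_simp
      nlinarith [hw2]
    · ext i
      fin_cases i <;> simp [pt, ← hw, div_mul_cancel₀, hw0.ne']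

lemma sigma_bounds {κ σ : ℝ} (hκ : 0 < κ)
    (hl : Real.sqrt 3 / Real.sqrt (κ+3) < σ) (hu : σ < Real.sqrt (κ+3) / Real.sqrt 3) :
    σ ≠ 0 ∧ 3 < (σ⁻¹)^2*(κ+3) ∧ 3*(σ⁻¹)^2 < κ+3 := by
  have hk : (0:ℝ) < κ+3 := by linarith
  have hs3 : (0:ℝ) < Real.sqrt 3 := Real.sqrt_pos.2 (by norm_num)
  have hsk : (0:ℝ) < Real.sqrt (κ+3) := Real.sqrt_pos.2 hk
  have hσ : 0 < σ := lt_trans (div_pos hs3 hsk) hl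
  have e3 : Real.sqrt 3 ^ 2 = 3 := Real.sq_sqrt (by norm_num)
  have ek : Real.sqrt (κ+3) ^ 2 = κ+3 := Real.sq_sqrt hk.le
  have hA : Real.sqrt 3 < σ * Real.sqrt (κ+3) := (div_lt_iff₀ hsk).mp hl
  have hB : σ * Real.sqrt 3 < Real.sqrt (κ+3) := by
    rw [lt_div_iff₀ hs3] at hu; exact hu
  have h1 : 3 < σ^2*(κ+3) := by nlinarith [hs3.le, hA]
  have h2 : σ^2*3 < κ+3 := by nlinarith [hB, mul_pos hσ hs3]
  have haσ : (σ⁻¹)^2*σ^2 = 1 := by field_simp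
  have hia : 0 < (σ⁻¹)^2 := by positivity
  refine ⟨hσ.ne', ?_, ?_⟩
  · nlinarith [mul_lt_mul_of_pos_left h2 hia]
  · nlinarith [mul_lt_mul_of_pos_left h1 hia]

lemma m_bounds {κ a b c₁ c₂ : ℝ} (hk : 0 < κ+3)
    (ha1 : 3 < a*(κ+3)) (ha2 : 3*a < κ+3) (hb1 : 3 < b*(κ+3)) (hb2 : 3*b < κ+3)
    (hc : c₁^2+c₂^2 = 1) :
    3 < (a*c₁^2 + b*c₂^2)*(κ+3) ∧ 3*(a*c₁^2+b*c₂^2) < κ+3 := by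
  have hpos : 0 < c₁^2 ∨ 0 < c₂^2 := by
    by_contra h
    push_neg at h
    nlinarith [sq_nonneg c₁, sq_nonneg c₂]
  rcases hpos with h | h
  · constructor
    · nlinarith [mul_lt_mul_of_pos_right ha1 h, mul_nonneg (by linarith : (0:ℝ) ≤ b*(κ+3) - 3) (sq_nonneg c₂)]
    · nlinarith [mul_lt_mul_of_pos_right ha2 h, mul_nonneg (by linarith : (0:ℝ) ≤ (κ+3) - 3*b) (sq_nonneg c₂)]
  · constructor
    · nlinarith [mul_lt_mul_of_pos_right hb1 h, mul_nonneg (by linarith : (0:ℝ) ≤ a*(κ+3) - 3) (sq_nonneg c₁)]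
    · nlinarith [mul_lt_mul_of_pos_right hb2 h, mul_nonneg (by linarith : (0:ℝ) ≤ (κ+3) - 3*a) (sq_nonneg c₁)]

lemma kent_north {σ₁ σ₂ : ℝ} (κ : ℝ) (h1 : σ₁ ≠ 0) (h2 : σ₂ ≠ 0) :
    kentDensity σ₁ σ₂ κ northPole = Real.exp κ := by
  rw [kent_coord κ h1 h2]
  have e0 : northPole 0 = 0 := rfl
  have e1 : northPole 1 = 0 := rfl
  have e2 : northPole 2 = 1 := rfl
  rw [e0, e1, e2]
  norm_num

lemma kent_south {σ₁ σ₂ : ℝ} (κ : ℝ) (h1 : σ₁ ≠ 0) (h2 : σ₂ ≠ 0) :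
    kentDensity σ₁ σ₂ κ southPole = Real.exp (-κ) := by
  rw [kent_coord κ h1 h2]
  have e0 : southPole 0 = 0 := rfl
  have e1 : southPole 1 = 0 := rfl
  have e2 : southPole 2 = -1 := rfl
  rw [e0, e1, e2]
  norm_num

/-- under the Kent constraints
`√3/√(κ+3) < σᵢ < √(κ+3)/√3`, the Kent-like ZLP density has exactly one local maximum on
`S²`, attained at the north pole, and exactly one local minimum, attained at the south
pole. -/
theorem kentDensity_unique_extrema (κ σ₁ σ₂ : ℝ) (hκ : 0 < κ)
    (h1l : Real.sqrt 3 / Real.sqrt (κ + 3) < σ₁)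
    (h1u : σ₁ < Real.sqrt (κ + 3) / Real.sqrt 3)
    (h2l : Real.sqrt 3 / Real.sqrt (κ + 3) < σ₂)
    (h2u : σ₂ < Real.sqrt (κ + 3) / Real.sqrt 3) :
    IsLocalMaxOn (kentDensity σ₁ σ₂ κ)
        (Metric.sphere (0 : EuclideanSpace ℝ (Fin 3)) 1) northPole ∧
      IsLocalMinOn (kentDensity σ₁ σ₂ κ)
        (Metric.sphere (0 : EuclideanSpace ℝ (Fin 3)) 1) southPole ∧
      (∀ y ∈ Metric.sphere (0 : EuclideanSpace ℝ (Fin 3)) 1,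
        IsLocalMaxOn (kentDensity σ₁ σ₂ κ)
          (Metric.sphere (0 : EuclideanSpace ℝ (Fin 3)) 1) y → y = northPole) ∧
      (∀ y ∈ Metric.sphere (0 : EuclideanSpace ℝ (Fin 3)) 1,
        IsLocalMinOn (kentDensity σ₁ σ₂ κ)
          (Metric.sphere (0 : EuclideanSpace ℝ (Fin 3)) 1) y → y = southPole) := by
  obtain ⟨hσ₁, ha1, ha2⟩ := sigma_bounds hκ h1l h1u
  obtain ⟨hσ₂, hb1, hb2⟩ := sigma_bounds hκ h2l h2u
  have hk : (0:ℝ) < κ+3 := by linarith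
  set f := kentDensity σ₁ σ₂ κ with hf
  set U := Metric.sphere (0 : EuclideanSpace ℝ (Fin 3)) 1 with hU
  -- the profile is strictly monotone on every meridian
  have hmono : ∀ c₁ c₂ : ℝ, c₁^2+c₂^2 = 1 →
      StrictMonoOn (ψ κ ((σ₁⁻¹*c₁)^2 + (σ₂⁻¹*c₂)^2)) (Set.Icc (-1:ℝ) 1) := by
    intro c₁ c₂ hc
    have hm := m_bounds hk ha1 ha2 hb1 hb2 hc
    rw [mul_pow, mul_pow]
    exact psi_mono hκ hm.1 hm.2
  have hIcc : ∀ t : ℝ, t^2 ≤ 1 → t ∈ Set.Icc (-1:ℝ) 1 := by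
    intro t ht; constructor <;> nlinarith
  -- global maximum at north pole
  have hmax : IsMaxOn f U northPole := by
    rw [isMaxOn_iff]
    intro y hy
    obtain ⟨c₁, c₂, hc, hyeq, ht2⟩ := rep hy
    have hN : f northPole = Real.exp κ := kent_north κ hσ₁ hσ₂
    rw [hN]
    calc f y = ψ κ ((σ₁⁻¹*c₁)^2 + (σ₂⁻¹*c₂)^2) (y 2) := by
          rw [hf, hyeq]; exact kent_pt κ hσ₁ hσ₂ hc ht2
    _ ≤ ψ κ ((σ₁⁻¹*c₁)^2 + (σ₂⁻¹*c₂)^2) 1 :=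
        (hmono c₁ c₂ hc).monotoneOn (hIcc _ ht2) (hIcc 1 (by norm_num)) (hIcc _ ht2).2
    _ = Real.exp κ := psi_one _ _
  -- global minimum at south pole
  have hmin : IsMinOn f U southPole := by
    rw [isMinOn_iff]
    intro y hy
    obtain ⟨c₁, c₂, hc, hyeq, ht2⟩ := rep hy
    have hS : f southPole = Real.exp (-κ) := kent_south κ hσ₁ hσ₂
    rw [hS]
    calc Real.exp (-κ) = ψ κ ((σ₁⁻¹*c₁)^2 + (σ₂⁻¹*c₂)^2) (-1) := (psi_neg_one _ _).symm
    _ ≤ ψ κ ((σ₁⁻¹*c₁)^2 + (σ₂⁻¹*c₂)^2) (y 2) :=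
        (hmono c₁ c₂ hc).monotoneOn (hIcc (-1) (by norm_num)) (hIcc _ ht2) (hIcc _ ht2).1
    _ = f y := by rw [hf, hyeq]; exact (kent_pt κ hσ₁ hσ₂ hc ht2).symm
  refine ⟨hmax.localize, hmin.localize, ?_, ?_⟩
  · -- uniqueness of the local maximum
    intro y hy hloc
    by_contra hne
    obtain ⟨c₁, c₂, hc, hyeq, ht2⟩ := rep hy
    obtain ⟨htl, htu⟩ := hIcc _ ht2
    have htlt : y 2 < 1 := by
      rcases eq_or_lt_of_le htu with h | h
      · exact absurd (by rw [hyeq, h, pt_one]) hne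
      · exact h
    have hev : ∀ᶠ x in nhdsWithin y U, f x ≤ f y := hloc
    obtain ⟨ε, hε, hball⟩ := Metric.mem_nhdsWithin_iff.mp hev
    obtain ⟨δ, hδ, hd⟩ := Metric.continuousAt_iff.mp ((pt_cont c₁ c₂).continuousAt) ε hε
    set s := min (y 2 + δ/2) 1 with hs
    have hts : y 2 < s := lt_min (by linarith) htlt
    have hs1 : s ≤ 1 := min_le_right _ _
    have hsm1 : (-1:ℝ) ≤ s := le_trans htl hts.le
    have hs2 : s^2 ≤ 1 := by nlinarith
    have hds : dist s (y 2) < δ := by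
      rw [Real.dist_eq, abs_of_pos (by linarith)]
      have : s ≤ y 2 + δ/2 := min_le_left _ _
      linarith
    have hdp : dist (pt c₁ c₂ s) y < ε := by
      have := hd hds
      rwa [← hyeq] at this
    have hmem : pt c₁ c₂ s ∈ Metric.ball y ε ∩ U :=
      ⟨Metric.mem_ball.2 hdp, pt_mem hc hs2⟩
    have hle : f (pt c₁ c₂ s) ≤ f y := hball hmem
    have hlt : f y < f (pt c₁ c₂ s) := by
      rw [hf, hyeq, kent_pt κ hσ₁ hσ₂ hc ht2, kent_pt κ hσ₁ hσ₂ hc hs2]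
      exact (hmono c₁ c₂ hc) (hIcc _ ht2) ⟨hsm1, hs1⟩ hts
    rw [hf] at hle hlt
    rw [hyeq] at hle hlt
    linarith
  · -- uniqueness of the local minimum
    intro y hy hloc
    by_contra hne
    obtain ⟨c₁, c₂, hc, hyeq, ht2⟩ := rep hy
    obtain ⟨htl, htu⟩ := hIcc _ ht2
    have htgt : -1 < y 2 := by
      rcases eq_or_lt_of_le htl with h | h
      · exact absurd (by rw [hyeq, ← h, pt_neg_one]) hne
      · exact h
    have hev : ∀ᶠ x in nhdsWithin y U, f y ≤ f x := hloc
    obtain ⟨ε, hε, hball⟩ := Metric.mem_nhdsWithin_iff.mp hev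
    obtain ⟨δ, hδ, hd⟩ := Metric.continuousAt_iff.mp ((pt_cont c₁ c₂).continuousAt) ε hε
    set s := max (y 2 - δ/2) (-1) with hs
    have hts : s < y 2 := max_lt (by linarith) htgt
    have hsm1 : (-1:ℝ) ≤ s := le_max_right _ _
    have hs1 : s ≤ 1 := le_trans hts.le htu
    have hs2 : s^2 ≤ 1 := by nlinarith
    have hds : dist s (y 2) < δ := by
      rw [Real.dist_eq, abs_of_neg (by linarith)]
      have : y 2 - δ/2 ≤ s := le_max_left _ _
      linarith
    have hdp : dist (pt c₁ c₂ s) y < ε := by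
      have := hd hds
      rwa [← hyeq] at this
    have hmem : pt c₁ c₂ s ∈ Metric.ball y ε ∩ U :=
      ⟨Metric.mem_ball.2 hdp, pt_mem hc hs2⟩
    have hle : f y ≤ f (pt c₁ c₂ s) := hball hmem
    have hlt : f (pt c₁ c₂ s) < f y := by
      rw [hf, hyeq, kent_pt κ hσ₁ hσ₂ hc ht2, kent_pt κ hσ₁ hσ₂ hc hs2]
      exact (hmono c₁ c₂ hc) ⟨hsm1, hs1⟩ (hIcc _ ht2) hts
    rw [hf] at hle hlt
    rw [hyeq] at hle hlt
    linarith
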